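/- arXiv:2604.12244 — 5 statements merged into one kernel-verified Lean document; each statement's English description precedes it below -/
import Mathlib

section
/- Let f be a Möbius transformation with real coefficients such that f maps the real interval [-1,1] into [-ρ, ρ] for some ρ > 0. Then f maps the closed unit disk in ℂ into the closed disk of radius ρ, and the open unit disk into the open disk of radius ρ. -/
/-!
On `[-1, 1]` the hypothesis says that the quadratic `ρ²(cx + d)² - (ax + b)²` is nonnegative.
For `z = x + iy` in the closed unit disk, `ρ²|cz + d|² - |az + b|²` is the same expression with
`x²` replaced by `s = |z|²`, and so it is affine in `s` on `[x², 1]`. At `s = x²` it is the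
quadratic at `x`; at `s = 1` it is affine in `x`, hence a convex combination of the values of the
quadratic at `±1`. Both endpoint values are nonnegative, which gives the closed bound. The strict
bound on the open disk then follows from the maximum modulus principle, since a Möbius
transformation with nonzero determinant is not constant.
-/

open Complex Metric Set

theorem affine_nonneg_of_quadratic_nonneg {A B C : ℝ}
    (hq : ∀ x ∈ Icc (-1 : ℝ) 1, 0 ≤ A * x ^ 2 + B * x + C) {s x : ℝ} (hxs : x ^ 2 ≤ s)
    (hs : s ≤ 1) : 0 ≤ A * s + B * x + C := by
  have hx : x ∈ Icc (-1 : ℝ) 1 := ⟨by nlinarith, by nlinarith⟩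
  have h_left : 0 ≤ A * x ^ 2 + B * x + C := hq x hx
  -- `A + Bx + C` is the convex combination of the values at `1` and `-1` with weights `(1 ± x)/2`.
  have h_right : 0 ≤ A + B * x + C := by
    nlinarith [mul_nonneg (sub_nonneg.2 hx.1) (hq 1 (by norm_num)),
      mul_nonneg (sub_nonneg.2 hx.2) (hq (-1) (by norm_num))]
  have h_interp : (1 - x ^ 2) * (A * s + B * x + C)
      = (1 - s) * (A * x ^ 2 + B * x + C) + (s - x ^ 2) * (A + B * x + C) := by ring
  rcases (show x ^ 2 ≤ 1 by linarith).lt_or_eq with hx1 | hx1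
  · refine nonneg_of_mul_nonneg_right ?_ (sub_pos.2 hx1)
    rw [h_interp]
    exact add_nonneg (mul_nonneg (by linarith) h_left) (mul_nonneg (by linarith) h_right)
  · rwa [show s = 1 by linarith, mul_one]

theorem Complex.normSq_ofReal_mul_add_ofReal (a b : ℝ) (z : ℂ) :
    normSq (a * z + b) = a ^ 2 * normSq z + 2 * a * b * z.re + b ^ 2 := by
  simp only [normSq_apply, add_re, add_im, mul_re, mul_im, ofReal_re, ofReal_im]
  ring

theorem norm_ofReal_mul_add_le_of_forall_Icc {a b c d ρ : ℝ} (hρ : 0 ≤ ρ)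
    (h : ∀ x ∈ Icc (-1 : ℝ) 1, |a * x + b| ≤ ρ * |c * x + d|) {z : ℂ} (hz : ‖z‖ ≤ 1) :
    ‖(a : ℂ) * z + b‖ ≤ ρ * ‖(c : ℂ) * z + d‖ := by
  have hq : ∀ x ∈ Icc (-1 : ℝ) 1, 0 ≤ (ρ ^ 2 * c ^ 2 - a ^ 2) * x ^ 2
      + 2 * (ρ ^ 2 * c * d - a * b) * x + (ρ ^ 2 * d ^ 2 - b ^ 2) := by
    intro x hx
    have := pow_le_pow_left₀ (abs_nonneg _) (h x hx) 2
    rw [mul_pow, sq_abs, sq_abs] at this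
    linarith
  have hre : z.re ^ 2 ≤ normSq z := by rw [normSq_apply]; nlinarith [mul_self_nonneg z.im]
  have hs : normSq z ≤ 1 := by rw [normSq_eq_norm_sq]; nlinarith [norm_nonneg z]
  have key := affine_nonneg_of_quadratic_nonneg hq hre hs
  rw [← sq_le_sq₀ (norm_nonneg _) (by positivity), mul_pow, ← normSq_eq_norm_sq,
    ← normSq_eq_norm_sq, normSq_ofReal_mul_add_ofReal, normSq_ofReal_mul_add_ofReal]
  linarith

def mobius {K : Type*} [Field K] (a b c d : K) (z : K) : K := (a * z + b) / (c * z + d)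

theorem mobius_injOn {K : Type*} [Field K] {a b c d : K} (hdet : a * d - b * c ≠ 0) :
    InjOn (mobius a b c d) {z | c * z + d ≠ 0} := by
  intro z hz w hw h
  rw [mobius, mobius, div_eq_div_iff hz hw] at h
  have : (a * d - b * c) * (z - w) = 0 := by linear_combination h
  exact sub_eq_zero.1 ((mul_eq_zero.1 this).resolve_left hdet)

theorem Complex.norm_lt_of_forall_norm_le_of_ne {E F : Type*} [NormedAddCommGroup E]
    [NormedSpace ℂ E] [NormedAddCommGroup F] [NormedSpace ℂ F] [StrictConvexSpace ℝ F]
    {f : E → F} {r ρ : ℝ} (hf : DifferentiableOn ℂ f (ball 0 r))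
    (hle : ∀ w ∈ ball 0 r, ‖f w‖ ≤ ρ) {u v : E} (hu : u ∈ ball 0 r) (hv : v ∈ ball 0 r)
    (huv : f u ≠ f v) {z : E} (hz : z ∈ ball 0 r) : ‖f z‖ < ρ := by
  refine (hle z hz).lt_of_ne fun hzρ => huv ?_
  have hmax : IsMaxOn (norm ∘ f) (ball 0 r) z := fun w hw => (hle w hw).trans hzρ.ge
  have hconst := eq_const_of_exists_max hf hz hmax
  exact (hconst hu).trans (hconst hv).symm

/-- A real-coefficient Möbius transformation mapping `[-1,1]` into `[-ρ,ρ]`,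
whose pole lies outside the closed unit disk (so it is holomorphic on a neighborhood of
the closed unit disk), maps the closed unit disk into the closed disk of radius `ρ` and
the open unit disk into the open disk of radius `ρ`. -/
theorem mobius_real_contraction_complex
    (a b c d ρ : ℝ) (hdet : a * d - b * c ≠ 0) (hρ : 0 < ρ)
    (hpole : ∀ z : ℂ, ‖z‖ ≤ 1 → (c : ℂ) * z + d ≠ 0)
    (hmap : ∀ x : ℝ, x ∈ Set.Icc (-1 : ℝ) 1 → (a * x + b) / (c * x + d) ∈ Set.Icc (-ρ) ρ) :
    (∀ z : ℂ, ‖z‖ ≤ 1 → ‖((a : ℂ) * z + b) / ((c : ℂ) * z + d)‖ ≤ ρ) ∧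
    (∀ z : ℂ, ‖z‖ < 1 → ‖((a : ℂ) * z + b) / ((c : ℂ) * z + d)‖ < ρ) := by
  have hreal : ∀ x ∈ Icc (-1 : ℝ) 1, |a * x + b| ≤ ρ * |c * x + d| := by
    intro x hx
    have hden : c * x + d ≠ 0 := by
      exact_mod_cast hpole x (by rw [norm_real, Real.norm_eq_abs]; exact abs_le.2 hx)
    rw [← div_le_iff₀ (abs_pos.2 hden), ← abs_div]
    exact abs_le.2 (hmap x hx)
  have hclosed : ∀ z : ℂ, ‖z‖ ≤ 1 → ‖mobius (a : ℂ) b c d z‖ ≤ ρ := fun z hz => by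
    rw [mobius, norm_div, div_le_iff₀ (norm_pos_iff.2 (hpole z hz))]
    exact norm_ofReal_mul_add_le_of_forall_Icc hρ.le hreal hz
  have hball : ∀ z ∈ ball (0 : ℂ) 1, ‖z‖ ≤ 1 := fun z hz => (mem_ball_zero_iff.1 hz).le
  have hdiff : DifferentiableOn ℂ (mobius (a : ℂ) b c d) (ball 0 1) :=
    DifferentiableOn.div (by fun_prop) (by fun_prop) fun z hz => hpole z (hball z hz)
  have hne : mobius (a : ℂ) b c d 0 ≠ mobius (a : ℂ) b c d (1 / 2) := fun h =>
    absurd (mobius_injOn (by exact_mod_cast hdet) (hpole 0 (by simp))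
      (hpole (1 / 2) (by norm_num)) h) (by norm_num)
  refine ⟨hclosed, fun z hz => ?_⟩
  exact norm_lt_of_forall_norm_le_of_ne hdiff (fun w hw => hclosed w (hball w hw))
    (by simp) (by norm_num) hne (mem_ball_zero_iff.2 hz)
end

section
/- Let f be a Möbius transformation satisfying f(𝔻₁) ⊆ 𝔻_ρ for some 0 < ρ ≤ 1, where 𝔻_t denotes the open disk of radius t centered at 0. Then for all u, v in the open unit disk 𝔻₁, d_hyp(f(u), f(v)) ≤ ρ · d_hyp(u, v), where d_hyp is the hyperbolic (Poincaré) distance on 𝔻₁. -/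
/-!
Dividing `f` by `ρ` gives a holomorphic self-map `g` of the disc, and by the Schwarz–Pick lemma
(the Schwarz lemma conjugated by disc automorphisms) `g` does not increase pseudo-hyperbolic
distance `δ`. So it suffices that the dilation `z ↦ ρ z` contracts the hyperbolic distance by
the factor `ρ`. For fixed `w` and `s = δ(z, w)`, the reverse triangle inequality shows that
`δ(ρ z, ρ w)` is largest when `z` lies on the diameter through `w`, on the side of the origin.
On a diameter `artanh δ` is a difference of `artanh`s, and `t ↦ ρ artanh t - artanh (ρ t)` is
increasing because its derivative `ρ / (1 - t²) - ρ / (1 - ρ² t²)` is nonnegative.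
-/

open Complex

/-- Inverse hyperbolic tangent. -/
noncomputable def artanh (x : ℝ) : ℝ := (1 / 2) * Real.log ((1 + x) / (1 - x))

/-- The Poincaré hyperbolic distance on the open unit disk:
`d_hyp(z,w) = 2 artanh |(z-w)/(1 - conj w · z)|`. -/
noncomputable def dHyp (z w : ℂ) : ℝ :=
  2 * artanh ‖(z - w) / (1 - (starRingEnd ℂ) w * z)‖

open Set Metric Filter Topology
open scoped ComplexConjugate

theorem mul_mem_Ioo_neg_one_one {ρ t : ℝ} (hρ₀ : 0 ≤ ρ) (hρ₁ : ρ ≤ 1) (ht : t ∈ Ioo (-1) 1) :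
    ρ * t ∈ Ioo (-1) 1 := by
  rw [mem_Ioo, ← abs_lt] at ht ⊢
  rw [abs_mul, abs_of_nonneg hρ₀]
  nlinarith [abs_nonneg t]

theorem Real.sub_div_one_sub_mul_mem_Ioo {x y : ℝ} (hx : x ∈ Ioo (-1) 1)
    (hy : y ∈ Ioo (-1) 1) : (y - x) / (1 - x * y) ∈ Ioo (-1) 1 := by
  obtain ⟨hx₁, hx₂⟩ := hx
  obtain ⟨hy₁, hy₂⟩ := hy
  have hxy : 0 < 1 - x * y := by nlinarith
  constructor
  · rw [lt_div_iff₀ hxy]; nlinarith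
  · rw [div_lt_iff₀ hxy]; nlinarith

theorem Real.artanh_eq_half_log_sub {x : ℝ} (hx : x ∈ Ioo (-1) 1) :
    Real.artanh x = 1 / 2 * (Real.log (1 + x) - Real.log (1 - x)) := by
  rw [Real.artanh_eq_half_log (Ioo_subset_Icc_self hx), Real.log_div] <;> grind

theorem Real.hasDerivAt_artanh {x : ℝ} (hx : x ∈ Ioo (-1) 1) :
    HasDerivAt Real.artanh (1 - x ^ 2)⁻¹ x := by
  have h₁ : 1 + x ≠ 0 := by grind
  have h₂ : 1 - x ≠ 0 := by grind
  have hlog : HasDerivAt (fun y => 1 / 2 * (Real.log (1 + y) - Real.log (1 - y)))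
      (1 / 2 * (1 / (1 + x) - (-1) / (1 - x))) x :=
    ((((hasDerivAt_id x).const_add 1).log h₁).sub
      (((hasDerivAt_id x).const_sub 1).log h₂)).const_mul _
  refine (hlog.congr_of_eventuallyEq ?_).congr_deriv ?_
  · filter_upwards [isOpen_Ioo.mem_nhds hx] with y hy using Real.artanh_eq_half_log_sub hy
  · rw [show 1 - x ^ 2 = (1 + x) * (1 - x) by ring]
    field_simp
    ring

theorem Real.artanh_sub_artanh {x y : ℝ} (hx : x ∈ Ioo (-1) 1) (hy : y ∈ Ioo (-1) 1) :
    Real.artanh y - Real.artanh x = Real.artanh ((y - x) / (1 - x * y)) := by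
  have hq := Real.sub_div_one_sub_mul_mem_Ioo hx hy
  obtain ⟨hx₁, hx₂⟩ := hx
  obtain ⟨hy₁, hy₂⟩ := hy
  have hx₁' : 0 < 1 + x := by linarith
  have hx₂' : 0 < 1 - x := by linarith
  have hy₁' : 0 < 1 + y := by linarith
  have hy₂' : 0 < 1 - y := by linarith
  have hxy : 0 < 1 - x * y := by nlinarith
  have hadd : 1 + (y - x) / (1 - x * y) = (1 + y) * (1 - x) / (1 - x * y) := by
    rw [eq_div_iff hxy.ne', add_mul, div_mul_cancel₀ _ hxy.ne']; ring
  have hsub : 1 - (y - x) / (1 - x * y) = (1 - y) * (1 + x) / (1 - x * y) := by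
    rw [eq_div_iff hxy.ne', sub_mul, div_mul_cancel₀ _ hxy.ne']; ring
  rw [Real.artanh_eq_half_log_sub ⟨hx₁, hx₂⟩, Real.artanh_eq_half_log_sub ⟨hy₁, hy₂⟩,
    Real.artanh_eq_half_log_sub hq, hadd, hsub, Real.log_div (by positivity) hxy.ne',
    Real.log_div (by positivity) hxy.ne', Real.log_mul hy₁'.ne' hx₂'.ne',
    Real.log_mul hy₂'.ne' hx₁'.ne']
  ring

theorem Real.monotoneOn_mul_artanh_sub_artanh_mul {ρ : ℝ} (hρ₀ : 0 ≤ ρ) (hρ₁ : ρ ≤ 1) :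
    MonotoneOn (fun t => ρ * Real.artanh t - Real.artanh (ρ * t)) (Ioo (-1) 1) := by
  have hderiv : ∀ t ∈ Ioo (-1) 1, HasDerivAt (fun t => ρ * Real.artanh t - Real.artanh (ρ * t))
      (ρ * (1 - t ^ 2)⁻¹ - (1 - (ρ * t) ^ 2)⁻¹ * ρ) t := fun t ht =>
    ((Real.hasDerivAt_artanh ht).const_mul ρ).sub
      ((Real.hasDerivAt_artanh (mul_mem_Ioo_neg_one_one hρ₀ hρ₁ ht)).comp t
        (((hasDerivAt_id t).const_mul ρ).congr_deriv (mul_one ρ)))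
  refine monotoneOn_of_hasDerivWithinAt_nonneg (convex_Ioo _ _)
    (f' := fun t => ρ * (1 - t ^ 2)⁻¹ - (1 - (ρ * t) ^ 2)⁻¹ * ρ)
    (fun t ht => (hderiv t ht).continuousAt.continuousWithinAt) ?_ ?_
  · rw [interior_Ioo]; exact fun t ht => (hderiv t ht).hasDerivWithinAt
  · rw [interior_Ioo]
    intro t ht
    have h₁ : 0 < 1 - t ^ 2 := by nlinarith [ht.1, ht.2]
    have h₂ : 1 - t ^ 2 ≤ 1 - (ρ * t) ^ 2 := by
      have : ρ ^ 2 ≤ 1 := by nlinarith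
      nlinarith [mul_le_mul_of_nonneg_right this (sq_nonneg t)]
    nlinarith [inv_anti₀ h₁ h₂]

/-- The bound on `r` is `δ(ρ x, ρ β)` for the point `x = (β - s) / (1 - β s)` with
`δ(x, β) = s`, where `δ(x, y) = (y - x) / (1 - x y)` is the pseudo-hyperbolic distance on the
diameter `(-1, 1)`. -/
theorem Real.artanh_le_mul_artanh {ρ β s r : ℝ} (hρ₀ : 0 ≤ ρ) (hρ₁ : ρ ≤ 1)
    (hβ : β ∈ Ioo (-1) 1) (hs₀ : 0 ≤ s) (hs₁ : s < 1) (hr₀ : 0 ≤ r)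
    (hr : r ≤ ρ * s * (1 - β ^ 2) / (1 - ρ ^ 2 * β ^ 2 - β * (1 - ρ ^ 2) * s)) :
    Real.artanh r ≤ ρ * Real.artanh s := by
  obtain ⟨hβ₀, hβ₁⟩ := hβ
  have hβs : 0 < 1 - β * s := by nlinarith
  set x := (β - s) / (1 - β * s)
  have hxmul : x * (1 - β * s) = β - s := div_mul_cancel₀ _ hβs.ne'
  have hx : x ∈ Ioo (-1) 1 := by
    constructor
    · rw [lt_div_iff₀ hβs]; nlinarith
    · rw [div_lt_iff₀ hβs]; nlinarith
  have hxβ : x ≤ β := by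
    rw [div_le_iff₀ hβs]; nlinarith [mul_nonneg hs₀ (by nlinarith : (0 : ℝ) ≤ 1 - β ^ 2)]
  have hs : s = (β - x) / (1 - x * β) := by
    rw [show β - x = s * (1 - β ^ 2) / (1 - β * s) by
        rw [eq_div_iff hβs.ne']; linear_combination -hxmul,
      show 1 - x * β = (1 - β ^ 2) / (1 - β * s) by
        rw [eq_div_iff hβs.ne']; linear_combination -β * hxmul,
      div_div_div_cancel_right₀ hβs.ne', mul_div_cancel_right₀ _ (by nlinarith)]
  have hbound : ρ * s * (1 - β ^ 2) / (1 - ρ ^ 2 * β ^ 2 - β * (1 - ρ ^ 2) * s)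
      = (ρ * β - ρ * x) / (1 - ρ * x * (ρ * β)) := by
    rw [show ρ * β - ρ * x = ρ * s * (1 - β ^ 2) / (1 - β * s) by
        rw [eq_div_iff hβs.ne']; linear_combination -ρ * hxmul,
      show 1 - ρ * x * (ρ * β) = (1 - ρ ^ 2 * β ^ 2 - β * (1 - ρ ^ 2) * s) / (1 - β * s) by
        rw [eq_div_iff hβs.ne']; linear_combination -ρ ^ 2 * β * hxmul,
      div_div_div_cancel_right₀ hβs.ne']
  have hρx := mul_mem_Ioo_neg_one_one hρ₀ hρ₁ hx
  have hρβ := mul_mem_Ioo_neg_one_one hρ₀ hρ₁ ⟨hβ₀, hβ₁⟩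
  have hmono := Real.monotoneOn_mul_artanh_sub_artanh_mul hρ₀ hρ₁ hx ⟨hβ₀, hβ₁⟩ hxβ
  calc Real.artanh r ≤ Real.artanh ((ρ * β - ρ * x) / (1 - ρ * x * (ρ * β))) :=
        Real.artanh_le_artanh (by linarith) (Real.sub_div_one_sub_mul_mem_Ioo hρx hρβ).2
          (hr.trans_eq hbound)
    _ = Real.artanh (ρ * β) - Real.artanh (ρ * x) := (Real.artanh_sub_artanh hρx hρβ).symm
    _ ≤ ρ * (Real.artanh β - Real.artanh x) := by linarith
    _ = ρ * Real.artanh s := by rw [Real.artanh_sub_artanh hx ⟨hβ₀, hβ₁⟩, ← hs]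

noncomputable def blaschke (a z : ℂ) : ℂ := (z - a) / (1 - conj a * z)

theorem normSq_one_sub_conj_mul_sub_normSq_sub (a z : ℂ) :
    normSq (1 - conj a * z) - normSq (z - a) = (1 - normSq a) * (1 - normSq z) := by
  simp only [normSq_apply, sub_re, sub_im, mul_re, mul_im, conj_re, conj_im, one_re, one_im]
  ring

theorem one_sub_conj_mul_ne_zero {a z : ℂ} (ha : ‖a‖ < 1) (hz : ‖z‖ < 1) :
    1 - conj a * z ≠ 0 := by
  refine sub_ne_zero.2 fun h => ?_
  have : ‖conj a * z‖ < 1 := by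
    rw [norm_mul, RCLike.norm_conj]; nlinarith [norm_nonneg a, norm_nonneg z]
  rw [← h, norm_one] at this
  exact lt_irrefl _ this

theorem norm_blaschke_lt_one {a z : ℂ} (ha : ‖a‖ < 1) (hz : ‖z‖ < 1) : ‖blaschke a z‖ < 1 := by
  have hden := one_sub_conj_mul_ne_zero ha hz
  rw [blaschke, norm_div, div_lt_one (norm_pos_iff.2 hden), ← sq_lt_sq₀ (norm_nonneg _)
    (norm_nonneg _), Complex.sq_norm, Complex.sq_norm, ← sub_pos,
    normSq_one_sub_conj_mul_sub_normSq_sub, ← Complex.sq_norm, ← Complex.sq_norm]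
  exact mul_pos (by nlinarith [norm_nonneg a]) (by nlinarith [norm_nonneg z])

@[simp]
theorem blaschke_self (a : ℂ) : blaschke a a = 0 := by simp [blaschke]

@[simp]
theorem blaschke_neg_zero (a : ℂ) : blaschke (-a) 0 = a := by simp [blaschke]

theorem blaschke_neg_blaschke {a z : ℂ} (ha : ‖a‖ < 1) (hz : ‖z‖ < 1) :
    blaschke (-a) (blaschke a z) = z := by
  have hden := one_sub_conj_mul_ne_zero ha hz
  have ha' : 1 - conj a * a ≠ 0 := one_sub_conj_mul_ne_zero ha ha
  have hnum : (z - a) / (1 - conj a * z) + a = z * (1 - conj a * a) / (1 - conj a * z) := by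
    rw [div_add' _ _ _ hden]; ring
  have hden' : 1 - -conj a * ((z - a) / (1 - conj a * z))
      = (1 - conj a * a) / (1 - conj a * z) := by
    field_simp; ring
  rw [blaschke, blaschke, map_neg, sub_neg_eq_add, hnum, hden', div_div_div_cancel_right₀ hden,
    mul_div_cancel_right₀ _ ha']

theorem differentiableOn_blaschke {a : ℂ} (ha : ‖a‖ < 1) :
    DifferentiableOn ℂ (blaschke a) (ball 0 1) := fun _ hz =>
  ((differentiableAt_id.sub_const a).div ((differentiableAt_id.const_mul _).const_sub 1)
    (one_sub_conj_mul_ne_zero ha (mem_ball_zero_iff.1 hz))).differentiableWithinAt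

theorem mapsTo_blaschke {a : ℂ} (ha : ‖a‖ < 1) : MapsTo (blaschke a) (ball 0 1) (ball 0 1) :=
  fun _ hz => mem_ball_zero_iff.2 (norm_blaschke_lt_one ha (mem_ball_zero_iff.1 hz))

theorem norm_blaschke_le_of_mapsTo_ball {g : ℂ → ℂ} (hg : DifferentiableOn ℂ g (ball 0 1))
    (hmaps : MapsTo g (ball 0 1) (ball 0 1)) {u v : ℂ} (hu : ‖u‖ < 1) (hv : ‖v‖ < 1) :
    ‖blaschke (g v) (g u)‖ ≤ ‖blaschke v u‖ := by
  have hgv : ‖g v‖ < 1 := mem_ball_zero_iff.1 (hmaps (mem_ball_zero_iff.2 hv))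
  have hv' : ‖-v‖ < 1 := by rwa [norm_neg]
  have hmaps' := hmaps.comp (mapsTo_blaschke hv')
  have hschwarz := Complex.norm_le_norm_of_mapsTo_ball
    ((differentiableOn_blaschke hgv).comp
      (hg.comp (differentiableOn_blaschke hv') (mapsTo_blaschke hv')) hmaps')
    (((mapsTo_blaschke hgv).comp hmaps').mono_right ball_subset_closedBall) (by simp)
    (norm_blaschke_lt_one hv hu)
  simpa [blaschke_neg_blaschke hv hu] using hschwarz

theorem blaschke_ofReal_mul_mul_eq {ρ : ℝ} (hρ : |ρ| ≤ 1) {z w : ℂ} (hz : ‖z‖ < 1)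
    (hw : ‖w‖ < 1) :
    blaschke (ρ * w) (ρ * z) * (1 - ρ ^ 2 * ‖w‖ ^ 2 + (1 - ρ ^ 2) * conj w * blaschke w z)
      = ρ * (1 - ‖w‖ ^ 2) * blaschke w z := by
  have hρw : ‖(ρ : ℂ) * w‖ < 1 := by
    rw [norm_mul, norm_real, Real.norm_eq_abs]; nlinarith [abs_nonneg ρ, norm_nonneg w]
  have hρz : ‖(ρ : ℂ) * z‖ < 1 := by
    rw [norm_mul, norm_real, Real.norm_eq_abs]; nlinarith [abs_nonneg ρ, norm_nonneg z]
  have hden := one_sub_conj_mul_ne_zero hw hz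
  have hden' : 1 - ρ ^ 2 * (conj w * z) ≠ 0 := by
    convert one_sub_conj_mul_ne_zero hρw hρz using 2
    rw [map_mul, conj_ofReal]; ring
  have hρ : blaschke (ρ * w) (ρ * z) = ρ * (z - w) / (1 - ρ ^ 2 * (conj w * z)) := by
    rw [blaschke, map_mul, conj_ofReal]; ring_nf
  have hfactor : 1 - ρ ^ 2 * ‖w‖ ^ 2 + (1 - ρ ^ 2) * conj w * blaschke w z
      = (1 - ‖w‖ ^ 2) * (1 - ρ ^ 2 * (conj w * z)) / (1 - conj w * z) := by
    rw [eq_div_iff hden, blaschke, add_mul, mul_assoc _ (_ / _), div_mul_cancel₀ _ hden]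
    linear_combination (ρ ^ 2 - 1) * (conj_mul' w)
  rw [hρ, hfactor, blaschke, div_mul_div_comm, mul_div_assoc',
    div_eq_div_iff (mul_ne_zero hden' hden) hden]
  ring

theorem norm_blaschke_ofReal_mul_le {ρ : ℝ} (hρ₀ : 0 ≤ ρ) (hρ₁ : ρ ≤ 1) {z w : ℂ}
    (hz : ‖z‖ < 1) (hw : ‖w‖ < 1) :
    ‖blaschke (ρ * w) (ρ * z)‖ ≤ ρ * ‖blaschke w z‖ * (1 - ‖w‖ ^ 2)
      / (1 - ρ ^ 2 * ‖w‖ ^ 2 - ‖w‖ * (1 - ρ ^ 2) * ‖blaschke w z‖) := by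
  set s := ‖blaschke w z‖
  set β := ‖w‖
  have hs : s < 1 := norm_blaschke_lt_one hw hz
  have hβ₀ : 0 ≤ β := norm_nonneg w
  have hρ2 : ρ ^ 2 ≤ 1 := by nlinarith
  have hD : 0 < 1 - ρ ^ 2 * β ^ 2 - β * (1 - ρ ^ 2) * s := by
    have : β * (1 - ρ ^ 2) * s ≤ β * (1 - ρ ^ 2) :=
      mul_le_of_le_one_right (mul_nonneg hβ₀ (sub_nonneg.2 hρ2)) hs.le
    nlinarith [mul_pos (sub_pos.2 hw) (by positivity : 0 < 1 + ρ ^ 2 * β)]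
  have hfactor : 1 - ρ ^ 2 * β ^ 2 - β * (1 - ρ ^ 2) * s
      ≤ ‖1 - ρ ^ 2 * ‖w‖ ^ 2 + (1 - ρ ^ 2) * conj w * blaschke w z‖ := by
    have h₁ : ‖(1 - ρ ^ 2 * ‖w‖ ^ 2 : ℂ)‖ = 1 - ρ ^ 2 * β ^ 2 := by
      rw [show (1 - ρ ^ 2 * ‖w‖ ^ 2 : ℂ) = ((1 - ρ ^ 2 * β ^ 2 : ℝ) : ℂ) by push_cast; rfl,
        norm_real, Real.norm_of_nonneg (by nlinarith)]
    have h₂ : ‖((1 - ρ ^ 2) * conj w * blaschke w z : ℂ)‖ = β * (1 - ρ ^ 2) * s := by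
      rw [show (1 - ρ ^ 2 : ℂ) = ((1 - ρ ^ 2 : ℝ) : ℂ) by push_cast; rfl, norm_mul, norm_mul,
        norm_real, Real.norm_of_nonneg (by linarith), RCLike.norm_conj]
      ring
    linarith [norm_sub_le_norm_add (1 - ρ ^ 2 * ‖w‖ ^ 2 : ℂ) ((1 - ρ ^ 2) * conj w * blaschke w z)]
  rw [le_div_iff₀ hD]
  calc ‖blaschke (ρ * w) (ρ * z)‖ * (1 - ρ ^ 2 * β ^ 2 - β * (1 - ρ ^ 2) * s)
      ≤ ‖blaschke (ρ * w) (ρ * z)‖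
          * ‖1 - ρ ^ 2 * ‖w‖ ^ 2 + (1 - ρ ^ 2) * conj w * blaschke w z‖ :=
        mul_le_mul_of_nonneg_left hfactor (norm_nonneg _)
    _ = ρ * s * (1 - β ^ 2) := by
      rw [← norm_mul, blaschke_ofReal_mul_mul_eq (abs_le.2 ⟨by linarith, hρ₁⟩) hz hw,
        show (ρ * (1 - ‖w‖ ^ 2) : ℂ) = ((ρ * (1 - β ^ 2) : ℝ) : ℂ) by push_cast; rfl,
        norm_mul, norm_real, Real.norm_of_nonneg (mul_nonneg hρ₀ (by nlinarith))]
      ring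

theorem artanh_norm_blaschke_ofReal_mul_le {ρ : ℝ} (hρ₀ : 0 ≤ ρ) (hρ₁ : ρ ≤ 1) {z w : ℂ}
    (hz : ‖z‖ < 1) (hw : ‖w‖ < 1) :
    Real.artanh ‖blaschke (ρ * w) (ρ * z)‖ ≤ ρ * Real.artanh ‖blaschke w z‖ :=
  Real.artanh_le_mul_artanh hρ₀ hρ₁ ⟨by linarith [norm_nonneg w], hw⟩ (norm_nonneg _)
    (norm_blaschke_lt_one hw hz) (norm_nonneg _) (norm_blaschke_ofReal_mul_le hρ₀ hρ₁ hz hw)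

theorem dHyp_eq_two_mul_artanh_norm_blaschke {z w : ℂ} (hz : ‖z‖ < 1) (hw : ‖w‖ < 1) :
    dHyp z w = 2 * Real.artanh ‖blaschke w z‖ := by
  have h := norm_blaschke_lt_one hw hz
  rw [dHyp, artanh, Real.artanh_eq_half_log ⟨by linarith [norm_nonneg (blaschke w z)], h.le⟩]
  rfl

theorem dHyp_le_mul_dHyp_of_mapsTo_ball {f : ℂ → ℂ} {ρ : ℝ} (hρ₁ : ρ ≤ 1)
    (hf : DifferentiableOn ℂ f (ball 0 1)) (hmaps : MapsTo f (ball 0 1) (ball 0 ρ)) {u v : ℂ}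
    (hu : ‖u‖ < 1) (hv : ‖v‖ < 1) : dHyp (f u) (f v) ≤ ρ * dHyp u v := by
  have hρ₀ : 0 < ρ := pos_of_mem_ball (hmaps (mem_ball_self one_pos))
  set g : ℂ → ℂ := fun z => (ρ : ℂ)⁻¹ * f z
  have hfg (z : ℂ) : f z = ρ * g z := by simp [g, hρ₀.ne']
  have hgmaps : MapsTo g (ball 0 1) (ball 0 1) := fun z hz => by
    have := mem_ball_zero_iff.1 (hmaps hz)
    rw [mem_ball_zero_iff, norm_mul, norm_inv, norm_real, Real.norm_of_nonneg hρ₀.le]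
    rwa [inv_mul_lt_iff₀ hρ₀, mul_one]
  have hgu := mem_ball_zero_iff.1 (hgmaps (mem_ball_zero_iff.2 hu))
  have hgv := mem_ball_zero_iff.1 (hgmaps (mem_ball_zero_iff.2 hv))
  have hfu := (mem_ball_zero_iff.1 (hmaps (mem_ball_zero_iff.2 hu))).trans_le hρ₁
  have hfv := (mem_ball_zero_iff.1 (hmaps (mem_ball_zero_iff.2 hv))).trans_le hρ₁
  rw [dHyp_eq_two_mul_artanh_norm_blaschke hu hv, dHyp_eq_two_mul_artanh_norm_blaschke hfu hfv,
    hfg u, hfg v]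
  calc 2 * Real.artanh ‖blaschke (ρ * g v) (ρ * g u)‖
      ≤ 2 * (ρ * Real.artanh ‖blaschke (g v) (g u)‖) := by
        gcongr; exact artanh_norm_blaschke_ofReal_mul_le hρ₀.le hρ₁ hgu hgv
    _ ≤ 2 * (ρ * Real.artanh ‖blaschke v u‖) := by
        gcongr
        exact Real.artanh_le_artanh (by linarith [norm_nonneg (blaschke (g v) (g u))])
          (norm_blaschke_lt_one hv hu)
          (norm_blaschke_le_of_mapsTo_ball (hf.const_mul _) hgmaps hu hv)
    _ = ρ * (2 * Real.artanh ‖blaschke v u‖) := by ring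

/-- Since `x / 0 = 0`, `hmap` does not exclude a pole by itself; but by continuity a pole `z₀`
would give `‖a z₀ + b‖ ≤ ρ ‖c z₀ + d‖ = 0`, putting `(z₀, 1)` in the kernel of `!![a, b; c, d]`. -/
theorem mul_add_ne_zero_of_norm_div_lt {a b c d : ℂ} (hdet : a * d - b * c ≠ 0) {ρ : ℝ}
    (hmap : ∀ z : ℂ, ‖z‖ < 1 → ‖(a * z + b) / (c * z + d)‖ < ρ) {z₀ : ℂ} (hz₀ : ‖z₀‖ < 1) :
    c * z₀ + d ≠ 0 := by
  intro hpole
  have hc : c ≠ 0 := by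
    rintro rfl
    exact hdet (by rw [show d = 0 by simpa using hpole]; ring)
  have hbound : ∀ᶠ z in 𝓝[≠] z₀, ‖a * z + b‖ ≤ ρ * ‖c * z + d‖ := by
    filter_upwards [self_mem_nhdsWithin,
      nhdsWithin_le_nhds (isOpen_ball.mem_nhds (mem_ball_zero_iff.2 hz₀))] with z hne hz
    have hden : c * z + d ≠ 0 := by
      rw [show c * z + d = c * (z - z₀) by linear_combination hpole]
      exact mul_ne_zero hc (sub_ne_zero.2 hne)
    have := hmap z (mem_ball_zero_iff.1 hz)
    rw [norm_div, div_lt_iff₀ (norm_pos_iff.2 hden)] at this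
    exact this.le
  have hlim := le_of_tendsto_of_tendsto
    ((Continuous.tendsto (by fun_prop) z₀).mono_left nhdsWithin_le_nhds)
    ((Continuous.tendsto (by fun_prop) z₀).mono_left nhdsWithin_le_nhds) hbound
  rw [hpole, norm_zero, mul_zero, norm_le_zero_iff] at hlim
  exact hdet (by linear_combination a * hpole - c * hlim)

theorem mobius_small_image_hyperbolic_contraction_general
    (a b c d : ℂ) (hdet : a * d - b * c ≠ 0) (ρ : ℝ) (hρ1 : ρ ≤ 1)
    (hmap : ∀ z : ℂ, ‖z‖ < 1 → ‖(a * z + b) / (c * z + d)‖ < ρ) :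
    ∀ u v : ℂ, ‖u‖ < 1 → ‖v‖ < 1 →
      dHyp ((a * u + b) / (c * u + d)) ((a * v + b) / (c * v + d)) ≤ ρ * dHyp u v := by
  intro u v hu hv
  refine dHyp_le_mul_dHyp_of_mapsTo_ball hρ1 (fun z hz => ?_)
    (fun z hz => mem_ball_zero_iff.2 (hmap z (mem_ball_zero_iff.1 hz))) hu hv
  have hden := mul_add_ne_zero_of_norm_div_lt hdet hmap (mem_ball_zero_iff.1 hz)
  exact DifferentiableAt.differentiableWithinAt (by fun_prop (disch := exact hden))

/-- A Möbius transformation `f` with `f(𝔻₁) ⊆ 𝔻_ρ`, `0 < ρ ≤ 1`,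
contracts the hyperbolic distance on the unit disk by the factor `ρ`:
`d_hyp(f u, f v) ≤ ρ · d_hyp(u, v)` for all `u, v ∈ 𝔻₁`. -/
theorem mobius_small_image_hyperbolic_contraction
    (a b c d : ℂ) (hdet : a * d - b * c ≠ 0) (ρ : ℝ) (hρ0 : 0 < ρ) (hρ1 : ρ ≤ 1)
    (hmap : ∀ z : ℂ, ‖z‖ < 1 → ‖(a * z + b) / (c * z + d)‖ < ρ) :
    ∀ u v : ℂ, ‖u‖ < 1 → ‖v‖ < 1 →
      dHyp ((a * u + b) / (c * u + d)) ((a * v + b) / (c * v + d)) ≤ ρ * dHyp u v :=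
  mobius_small_image_hyperbolic_contraction_general a b c d hdet ρ hρ1 hmap
end

section
/- Let g(z) = (az+b)/(cz+d) be a Möbius transformation mapping the closed unit disk into the open unit disk. Define its transpose g^⊤(z) = (az+c)/(bz+d). Then g^⊤ also maps the closed unit disk into the open unit disk. -/
/-!
Write `M = [[a, b], [c, d]]` and `Δ = ad - bc`. In homogeneous coordinates the identity
`g^⊤ = s ∘ g⁻¹ ∘ s`, with `s(x) = -1/x`, reads `M (-(bz + d), az + c) = Δ (-1, z)`.
If `|az + c| ≥ |bz + d|` for some `|z| ≤ 1`, then the point `ζ = -(bz + d)/(az + c)` lies in the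
closed disk, so `g` would send it into the open disk; but `g ζ = -1/z` lies outside it.
-/

section NormedDivisionRing

variable {𝕜 : Type*} [NormedDivisionRing 𝕜]

lemma norm_lt_norm_of_norm_div_lt_one {p q : 𝕜} (hq : q ≠ 0) (h : ‖p / q‖ < 1) : ‖p‖ < ‖q‖ := by
  rwa [norm_div, div_lt_one (norm_pos_iff.mpr hq)] at h

lemma ne_zero_and_norm_div_lt_one {p q : 𝕜} (h : ‖p‖ < ‖q‖) : q ≠ 0 ∧ ‖p / q‖ < 1 := by
  have hq : 0 < ‖q‖ := (norm_nonneg p).trans_lt h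
  exact ⟨norm_pos_iff.mp hq, by rwa [norm_div, div_lt_one hq]⟩

end NormedDivisionRing

section NormedField

variable {𝕜 : Type*} [NormedField 𝕜] {a b c d : 𝕜}

lemma norm_mul_add_mul_lt_of_norm_le
    (hg : ∀ z : 𝕜, ‖z‖ ≤ 1 → ‖a * z + b‖ < ‖c * z + d‖)
    {x y : 𝕜} (hy : y ≠ 0) (hxy : ‖x‖ ≤ ‖y‖) : ‖a * x + b * y‖ < ‖c * x + d * y‖ := by
  have hy' : 0 < ‖y‖ := norm_pos_iff.mpr hy
  have hz : ‖x / y‖ ≤ 1 := by rwa [norm_div, div_le_one hy']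
  have hnum : a * x + b * y = (a * (x / y) + b) * y := by field_simp
  have hden : c * x + d * y = (c * (x / y) + d) * y := by field_simp
  rw [hnum, hden, norm_mul, norm_mul]
  exact mul_lt_mul_of_pos_right (hg _ hz) hy'

lemma norm_mul_add_lt_transpose (hdet : a * d - b * c ≠ 0)
    (hg : ∀ z : 𝕜, ‖z‖ ≤ 1 → ‖a * z + b‖ < ‖c * z + d‖) :
    ∀ z : 𝕜, ‖z‖ ≤ 1 → ‖a * z + c‖ < ‖b * z + d‖ := by
  intro z hz
  by_contra! hle
  have hw : a * z + c ≠ 0 := by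
    intro hw
    rw [hw, norm_zero, norm_le_zero_iff] at hle
    exact hdet (by linear_combination a * hle - b * hw)
  have hnum : a * -(b * z + d) + b * (a * z + c) = -(a * d - b * c) := by ring
  have hden : c * -(b * z + d) + d * (a * z + c) = (a * d - b * c) * z := by ring
  have hlt := norm_mul_add_mul_lt_of_norm_le hg hw ((norm_neg (b * z + d)).trans_le hle)
  rw [hnum, hden, norm_neg, norm_mul] at hlt
  have hΔ : 0 < ‖a * d - b * c‖ := norm_pos_iff.mpr hdet
  nlinarith

end NormedField

/-- If the Möbius transformation `g(z) = (az+b)/(cz+d)` maps the closed unit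
disk into the open unit disk (in particular its pole lies outside the closed unit disk),
then its transpose `g^⊤(z) = (az+c)/(bz+d)` also maps the closed unit disk into the open
unit disk (and its pole lies outside the closed unit disk). -/
theorem mobius_transpose_maps_disk
    (a b c d : ℂ) (hdet : a * d - b * c ≠ 0)
    (hpole : ∀ z : ℂ, ‖z‖ ≤ 1 → c * z + d ≠ 0)
    (hmap : ∀ z : ℂ, ‖z‖ ≤ 1 → ‖(a * z + b) / (c * z + d)‖ < 1) :
    ∀ z : ℂ, ‖z‖ ≤ 1 → b * z + d ≠ 0 ∧ ‖(a * z + c) / (b * z + d)‖ < 1 := by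
  have hg : ∀ z : ℂ, ‖z‖ ≤ 1 → ‖a * z + b‖ < ‖c * z + d‖ := fun z hz =>
    norm_lt_norm_of_norm_div_lt_one (hpole z hz) (hmap z hz)
  exact fun z hz => ne_zero_and_norm_div_lt_one (norm_mul_add_lt_transpose hdet hg z hz)
end

section
/- Let Q be an irreducible row-stochastic matrix on a finite set C. Fix r* ∈ C and let M be the matrix obtained from I − Q by replacing its r*-th column with the all-ones column vector. Then M is invertible. -/
/-!
Write a vector `v` in the kernel of the modified matrix as `y + c • e_j` with `y j = 0`, where `j`
is the replaced column. Then `Q y = y + c • 𝟙`; since a stochastic average of `y` lies between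
the minimum and the maximum of `y`, evaluating at a maximiser and at a minimiser gives
`c ≤ 0 ≤ c`. So `y` is `Q`-harmonic, and by the strong maximum principle irreducibility forces
it to be constant; as `y j = 0`, `y = 0`.
-/

open Matrix Finset

namespace Matrix

variable {n R : Type*} [Fintype n] [DecidableEq n]

theorem updateCol_mulVec {m : Type*} [CommSemiring R] (A : Matrix m n R) (j : n) (c : m → R)
    (v : n → R) :
    A.updateCol j c *ᵥ v = A *ᵥ Function.update v j 0 + v j • c := by
  ext i
  simp only [mulVec, dotProduct, updateCol_apply, Pi.add_apply, Pi.smul_apply, smul_eq_mul]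
  rw [← Finset.add_sum_erase _ _ (mem_univ j), ← Finset.add_sum_erase _ _ (mem_univ j)]
  simp only [if_pos, Function.update_self, mul_zero, zero_add]
  rw [add_comm, mul_comm]
  congr 1
  refine Finset.sum_congr rfl fun k hk => ?_
  rw [if_neg (ne_of_mem_erase hk), Function.update_of_ne (ne_of_mem_erase hk)]

section OrderedRing

variable [Ring R] [PartialOrder R] [IsOrderedRing R] {Q : Matrix n n R} {y : n → R} {b : R}

theorem mulVec_apply_le_of_mem_rowStochastic (hQ : Q ∈ rowStochastic R n)
    (hy : ∀ k, y k ≤ b) (i : n) : (Q *ᵥ y) i ≤ b :=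
  calc (Q *ᵥ y) i = ∑ k, Q i k * y k := rfl
    _ ≤ ∑ k, Q i k * b := sum_le_sum fun k _ =>
        mul_le_mul_of_nonneg_left (hy k) (nonneg_of_mem_rowStochastic hQ)
    _ = b := by rw [← sum_mul, sum_row_of_mem_rowStochastic hQ, one_mul]

theorem le_mulVec_apply_of_mem_rowStochastic (hQ : Q ∈ rowStochastic R n)
    (hy : ∀ k, b ≤ y k) (i : n) : b ≤ (Q *ᵥ y) i := by
  have := mulVec_apply_le_of_mem_rowStochastic hQ (y := -y) (b := -b)
    (fun k => neg_le_neg (hy k)) i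
  rwa [mulVec_neg, Pi.neg_apply, neg_le_neg_iff] at this

end OrderedRing

section StrictOrderedRing

variable [CommRing R] [LinearOrder R] [IsStrictOrderedRing R] {Q : Matrix n n R} {y : n → R}

theorem apply_eq_of_mulVec_apply_eq_max (hQ : Q ∈ rowStochastic R n) {m : n}
    (hmax : ∀ k, y k ≤ y m) (hfix : (Q *ᵥ y) m = y m) {i : n} (hpos : 0 < Q m i) :
    y i = y m := by
  have hsum : ∑ k, Q m k * (y m - y k) = 0 := by
    simp only [mul_sub, sum_sub_distrib, ← sum_mul, sum_row_of_mem_rowStochastic hQ, one_mul]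
    exact sub_eq_zero.2 hfix.symm
  have hterm := (sum_eq_zero_iff_of_nonneg fun k _ =>
    mul_nonneg (nonneg_of_mem_rowStochastic hQ) (sub_nonneg.2 (hmax k))).1 hsum i (mem_univ i)
  rcases mul_eq_zero.1 hterm with h | h
  · exact absurd h hpos.ne'
  · exact (sub_eq_zero.1 h).symm

theorem IsIrreducible.apply_eq_of_mulVec_eq_self (hQ : Q ∈ rowStochastic R n)
    (hirr : Q.IsIrreducible) (hy : Q *ᵥ y = y) (i j : n) : y i = y j := by
  have : Nonempty n := ⟨i⟩
  obtain ⟨m, hm⟩ := Finite.exists_max y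
  have hpow : ∀ k, (Q ^ k) *ᵥ y = y := fun k => by
    induction k with
    | zero => simp
    | succ k ih => rw [pow_succ, ← mulVec_mulVec, hy, ih]
  have heq_max (l : n) : y l = y m := by
    obtain ⟨k, -, hk⟩ := (isIrreducible_iff_exists_pow_pos hirr.nonneg).1 hirr m l
    exact apply_eq_of_mulVec_apply_eq_max (pow_mem hQ k) hm (congrFun (hpow k) m) hk
  rw [heq_max i, heq_max j]

theorem IsIrreducible.eq_zero_of_updateCol_one_sub_mulVec_eq_zero (hQ : Q ∈ rowStochastic R n)
    (hirr : Q.IsIrreducible) {j : n} {v : n → R} (hv : (1 - Q).updateCol j 1 *ᵥ v = 0) :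
    v = 0 := by
  have : Nonempty n := ⟨j⟩
  set y := Function.update v j 0 with hy_def
  clear_value y
  have hQy (i : n) : (Q *ᵥ y) i = y i + v j := by
    have := congrFun hv i
    rw [updateCol_mulVec, ← hy_def, sub_mulVec, one_mulVec] at this
    simp only [Pi.add_apply, Pi.sub_apply, Pi.smul_apply, Pi.one_apply, smul_eq_mul, mul_one,
      Pi.zero_apply] at this
    linarith
  obtain ⟨m, hm⟩ := Finite.exists_max y
  obtain ⟨m', hm'⟩ := Finite.exists_min y
  have hvj : v j = 0 := by
    have hle := mulVec_apply_le_of_mem_rowStochastic hQ hm m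
    have hge := le_mulVec_apply_of_mem_rowStochastic hQ hm' m'
    rw [hQy] at hle hge
    linarith
  have hfix : Q *ᵥ y = y := funext fun i => by rw [hQy, hvj, add_zero]
  have hy : y = 0 := funext fun i => by
    rw [hirr.apply_eq_of_mulVec_eq_self hQ hfix i j, hy_def, Function.update_self, Pi.zero_apply]
  rw [← Function.update_eq_self j v, ← Function.update_idem, ← hy_def, hy, hvj]
  exact Function.update_eq_self_iff.2 rfl

end StrictOrderedRing

theorem IsIrreducible.isUnit_updateCol_one_sub [Field R] [LinearOrder R] [IsStrictOrderedRing R]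
    {Q : Matrix n n R} (hQ : Q ∈ rowStochastic R n) (hirr : Q.IsIrreducible) (j : n) :
    IsUnit ((1 - Q).updateCol j 1) := by
  rw [isUnit_iff_isUnit_det, isUnit_iff_ne_zero, Ne, ← exists_mulVec_eq_zero_iff]
  rintro ⟨v, hv0, hv⟩
  exact hv0 (hirr.eq_zero_of_updateCol_one_sub_mulVec_eq_zero hQ hv)

end Matrix

theorem replaced_column_matrix_invertible_general
    {C : Type*} [Fintype C] [DecidableEq C]
    (Q : Matrix C C ℝ)
    (hQnn : ∀ r r', 0 ≤ Q r r') (hQrow : ∀ r, ∑ r', Q r r' = 1)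
    (hQirr : ∀ r r', ∃ n, 0 < n ∧ 0 < (Q ^ n) r r')
    (rstar : C) :
    IsUnit (Matrix.updateCol ((1 : Matrix C C ℝ) - Q) rstar (fun _ => 1)) :=
  IsIrreducible.isUnit_updateCol_one_sub (mem_rowStochastic_iff_sum.2 ⟨hQnn, hQrow⟩)
    ((isIrreducible_iff_exists_pow_pos hQnn).2 hQirr) rstar

/-- Let `Q` be an irreducible row-stochastic matrix on a finite set `C`,
fix `r* ∈ C`, and let `M` be obtained from `I − Q` by replacing its `r*`-th column with
the all-ones vector. Then `M` is invertible. -/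
theorem replaced_column_matrix_invertible
    {C : Type*} [Fintype C] [DecidableEq C] [Nonempty C]
    (Q : Matrix C C ℝ)
    (hQnn : ∀ r r', 0 ≤ Q r r') (hQrow : ∀ r, ∑ r', Q r r' = 1)
    (hQirr : ∀ r r', ∃ n, 0 < n ∧ 0 < (Q ^ n) r r')
    (rstar : C) :
    IsUnit (Matrix.updateCol ((1 : Matrix C C ℝ) - Q) rstar (fun _ => 1)) :=
  replaced_column_matrix_invertible_general Q hQnn hQrow hQirr rstar
end

section
/- Let 0 < ρ < 1 and let (f_j)_{j=0}^{n-1} be maps on the closed interval [-1,1] with f_j([-1,1]) ⊆ [-ρ,ρ] and each f_j ρ-Lipschitz for the hyperbolic metric d_hyp on (-1,1). Define u = f_{n-1} ∘ ⋯ ∘ f_1 ∘ f_0 (0) and v = f_{n-1} ∘ ⋯ ∘ f_1 (0) (omitting f_0). Then |u − v| ≤ artanh(ρ) · ρ^{n-1}. -/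
/-- The hyperbolic distance on `(-1,1)`: `d_hyp(x,y) = 2|artanh x - artanh y|`. -/
noncomputable def dHypR (x y : ℝ) : ℝ := 2 * |artanh x - artanh y|

open Set

section Orbit

variable {α : Type*} {S : Set α} {f : ℕ → α → α} {m n : ℕ}

theorem orbit_mem (hf : ∀ j, m ≤ j → j < n → MapsTo (f j) S S) {a : ℕ → α}
    (ha : ∀ j, m ≤ j → j < n → a (j + 1) = f j (a j)) (ham : a m ∈ S) :
    ∀ j, m ≤ j → j ≤ n → a j ∈ S := by
  intro j hmj
  induction j, hmj using Nat.le_induction with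
  | base => exact fun _ => ham
  | succ j hmj ih =>
    intro (hjn : j < n)
    rw [ha j hmj hjn]
    exact hf j hmj hjn (ih hjn.le)

theorem orbit_dist_le_pow_mul (d : α → α → ℝ) {ρ : ℝ} (hρ : 0 ≤ ρ)
    (hf : ∀ j, m ≤ j → j < n → MapsTo (f j) S S)
    (hlip : ∀ j, m ≤ j → j < n → ∀ x ∈ S, ∀ y ∈ S, d (f j x) (f j y) ≤ ρ * d x y)
    {a b : ℕ → α} (ha : ∀ j, m ≤ j → j < n → a (j + 1) = f j (a j))
    (hb : ∀ j, m ≤ j → j < n → b (j + 1) = f j (b j)) (ham : a m ∈ S) (hbm : b m ∈ S) :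
    ∀ j, m ≤ j → j ≤ n → d (a j) (b j) ≤ ρ ^ (j - m) * d (a m) (b m) := by
  intro j hmj
  induction j, hmj using Nat.le_induction with
  | base => simp
  | succ j hmj ih =>
    intro (hjn : j < n)
    rw [ha j hmj hjn, hb j hmj hjn, Nat.sub_add_comm hmj, pow_succ', mul_assoc]
    calc d (f j (a j)) (f j (b j)) ≤ ρ * d (a j) (b j) :=
          hlip j hmj hjn _ (orbit_mem hf ha ham j hmj hjn.le) _
            (orbit_mem hf hb hbm j hmj hjn.le)
      _ ≤ ρ * (ρ ^ (j - m) * d (a m) (b m)) := mul_le_mul_of_nonneg_left (ih hjn.le) hρ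

end Orbit

namespace Real

theorem artanh_neg_eq_neg_artanh (x : ℝ) : artanh (-x) = -artanh x := by
  have h : (1 + -x) / (1 - -x) = ((1 + x) / (1 - x))⁻¹ := by rw [inv_div]; ring_nf
  rw [artanh, artanh, h, sqrt_inv, log_inv]

theorem abs_artanh_le_artanh {x ρ : ℝ} (hx : |x| ≤ ρ) (hρ : ρ < 1) :
    |artanh x| ≤ artanh ρ := by
  obtain ⟨hρx, hxρ⟩ := abs_le.mp hx
  have hlow : artanh (-ρ) ≤ artanh x := artanh_le_artanh (by linarith) (by linarith) hρx
  rw [artanh_neg_eq_neg_artanh] at hlow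
  exact abs_le.mpr ⟨hlow, artanh_le_artanh (by linarith) hρ hxρ⟩

theorem hasDerivAt_tanh (x : ℝ) : HasDerivAt tanh (1 - tanh x ^ 2) x := by
  have htanh : tanh = sinh / cosh := funext tanh_eq_sinh_div_cosh
  rw [htanh]
  refine ((hasDerivAt_sinh x).div (hasDerivAt_cosh x) (cosh_pos x).ne').congr_deriv ?_
  rw [Pi.div_apply]
  field_simp

theorem lipschitzWith_one_tanh : LipschitzWith 1 tanh := by
  refine lipschitzWith_of_nnnorm_deriv_le (fun x => (hasDerivAt_tanh x).differentiableAt)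
    fun x => ?_
  rw [(hasDerivAt_tanh x).deriv, ← NNReal.coe_le_coe, coe_nnnorm, norm_eq_abs, NNReal.coe_one,
    abs_le]
  have := (sq_lt_one_iff_abs_lt_one _).mpr (abs_tanh_lt_one x)
  constructor <;> linarith [sq_nonneg (tanh x)]

theorem abs_sub_le_abs_artanh_sub {x y : ℝ} (hx : x ∈ Ioo (-1) 1) (hy : y ∈ Ioo (-1) 1) :
    |x - y| ≤ |artanh x - artanh y| := by
  simpa only [tanh_artanh hx, tanh_artanh hy, dist_eq, NNReal.coe_one, one_mul] using
    lipschitzWith_one_tanh.dist_le_mul (artanh x) (artanh y)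

end Real

theorem artanh_eq_real_artanh {x : ℝ} (hx : x ∈ Icc (-1) 1) : artanh x = Real.artanh x :=
  (Real.artanh_eq_half_log hx).symm

theorem abs_sub_le_half_dHypR {x y : ℝ} (hx : x ∈ Ioo (-1) 1) (hy : y ∈ Ioo (-1) 1) :
    |x - y| ≤ dHypR x y / 2 := by
  rw [dHypR, artanh_eq_real_artanh (Ioo_subset_Icc_self hx),
    artanh_eq_real_artanh (Ioo_subset_Icc_self hy)]
  linarith [Real.abs_sub_le_abs_artanh_sub hx hy]

theorem dHypR_zero_le {x ρ : ℝ} (hx : |x| ≤ ρ) (hρ : ρ < 1) : dHypR x 0 ≤ 2 * artanh ρ := by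
  have hxI : x ∈ Icc (-1) 1 := abs_le.mp (hx.trans hρ.le)
  have hρI : ρ ∈ Icc (-1) 1 := ⟨by linarith [abs_nonneg x], hρ.le⟩
  rw [dHypR, artanh_eq_real_artanh hxI, artanh_eq_real_artanh hρI,
    artanh_eq_real_artanh ⟨by norm_num, by norm_num⟩, Real.artanh_zero, sub_zero]
  linarith [Real.abs_artanh_le_artanh hx hρ]

/-- Let `0 < ρ < 1` and `f_0, …, f_{n-1}` be maps sending `[-1,1]` into
`[-ρ,ρ]`, each `ρ`-Lipschitz for the hyperbolic metric on `(-1,1)`. If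
`u = f_{n-1}∘⋯∘f_0(0)` and `v = f_{n-1}∘⋯∘f_1(0)` (encoded by the orbit sequences
`a`, `b` with `a 0 = 0`, `a (j+1) = f_j (a j)`, `b 1 = 0`, `b (j+1) = f_j (b j)` for
`j ≥ 1`), then `|u − v| ≤ artanh(ρ) · ρ^{n-1}`. -/
theorem composition_difference_bound
    (ρ : ℝ) (hρ0 : 0 < ρ) (hρ1 : ρ < 1) (n : ℕ) (hn : 1 ≤ n)
    (f : ℕ → ℝ → ℝ)
    (hfmap : ∀ j < n, ∀ x ∈ Set.Icc (-1 : ℝ) 1, f j x ∈ Set.Icc (-ρ) ρ)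
    (hflip : ∀ j < n, ∀ x ∈ Set.Ioo (-1 : ℝ) 1, ∀ y ∈ Set.Ioo (-1 : ℝ) 1,
      dHypR (f j x) (f j y) ≤ ρ * dHypR x y)
    (a b : ℕ → ℝ)
    (ha0 : a 0 = 0) (ha : ∀ j < n, a (j + 1) = f j (a j))
    (hb1 : b 1 = 0) (hb : ∀ j, 1 ≤ j → j < n → b (j + 1) = f j (b j)) :
    |a n - b n| ≤ artanh ρ * ρ ^ (n - 1) := by
  have hS : Icc (-ρ) ρ ⊆ Ioo (-1) 1 := Icc_subset_Ioo (by linarith) hρ1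
  have hmaps : ∀ j, 1 ≤ j → j < n → MapsTo (f j) (Icc (-ρ) ρ) (Icc (-ρ) ρ) :=
    fun j _ hjn x hx => hfmap j hjn x (Ioo_subset_Icc_self (hS hx))
  have hlip : ∀ j, 1 ≤ j → j < n → ∀ x ∈ Icc (-ρ) ρ, ∀ y ∈ Icc (-ρ) ρ,
      dHypR (f j x) (f j y) ≤ ρ * dHypR x y :=
    fun j _ hjn x hx y hy => hflip j hjn x (hS hx) y (hS hy)
  have ha' : ∀ j, 1 ≤ j → j < n → a (j + 1) = f j (a j) := fun j _ => ha j
  have ha1 : a 1 ∈ Icc (-ρ) ρ := by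
    rw [ha 0 hn, ha0]
    exact hfmap 0 hn 0 ⟨by norm_num, by norm_num⟩
  have hb1' : b 1 ∈ Icc (-ρ) ρ := hb1 ▸ ⟨by linarith, hρ0.le⟩
  have han := orbit_mem hmaps ha' ha1 n hn le_rfl
  have hbn := orbit_mem hmaps hb hb1' n hn le_rfl
  calc |a n - b n| ≤ dHypR (a n) (b n) / 2 := abs_sub_le_half_dHypR (hS han) (hS hbn)
    _ ≤ ρ ^ (n - 1) * dHypR (a 1) (b 1) / 2 := by
        gcongr
        exact orbit_dist_le_pow_mul dHypR hρ0.le hmaps hlip ha' hb ha1 hb1' n hn le_rfl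
    _ ≤ ρ ^ (n - 1) * (2 * artanh ρ) / 2 := by
        rw [hb1]
        gcongr
        exact dHypR_zero_le (abs_le.mpr ha1) hρ1
    _ = artanh ρ * ρ ^ (n - 1) := by ring
end
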